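/- arXiv:2203.13566 — 2 statements merged into one kernel-verified Lean document; each statement's English description precedes it below -/
import Mathlib

section
/- Let N ≥ 2 and let Γ₁,…,Γ_N ∈ ℝ \ {0} satisfy Σ_{i,j ∈ I, i ≠ j} Γ_iΓ_j ≠ 0 for every subset I ⊆ {1,…,N} with |I| ≥ 2. Define H(z₁,…,z_N) = −(1/(2π)) Σ_{i ≠ j} Γ_iΓ_j ln ‖z_i − z_j‖ on the open set F_N(ℝ²) = {(z₁,…,z_N) ∈ (ℝ²)^N : z_i ≠ z_j for i ≠ j}. Then there exist constants c > 0 and δ > 0 such that for every z = (z₁,…,z_N) ∈ F_N(ℝ²) with (Σ_{i=1}^N ‖z_i‖²)^{1/2} < δ one has ‖∇H(z)‖ ≥ c · (Σ_{i=1}^N ‖z_i‖²)^{−1/2}. -/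
/-! The Hamiltonian is logarithmically homogeneous: `H (t • z) = H z + L log t` with
`L = -(1/2π) ∑_{i ≠ j} Γ_i Γ_j`, and `L ≠ 0` by the nondegeneracy hypothesis for `I = univ`.
Differentiating at `t = 1` gives Euler's identity `⟪∇H z, z⟫ = L`, so Cauchy–Schwarz yields
`‖∇H z‖ ≥ |L| ‖z‖⁻¹` at every collision-free `z`, for any `δ`. -/

open Finset Real

section Euler

variable {F : Type*} [NormedAddCommGroup F] [InnerProductSpace ℝ F] [CompleteSpace F]

theorem inner_gradient_self_eq_of_log_homogeneous {f : F → ℝ} {z : F} {L : ℝ}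
    (hf : DifferentiableAt ℝ f z) (hhom : ∀ t : ℝ, 0 < t → f (t • z) = f z + L * Real.log t) :
    inner ℝ (gradient f z) z = L := by
  have hray : HasDerivAt (fun t : ℝ => f (t • z)) (inner ℝ (gradient f z) z) 1 := by
    have hfd : HasFDerivAt f (InnerProductSpace.toDual ℝ F (gradient f z)) ((1 : ℝ) • z) := by
      rw [one_smul]; exact hf.hasGradientAt.hasFDerivAt
    have hline : HasDerivAt (fun t : ℝ => t • z) z 1 := by
      simpa using (hasDerivAt_id (1 : ℝ)).smul_const z
    exact hfd.comp_hasDerivAt 1 hline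
  have hmodel : HasDerivAt (fun t : ℝ => f z + L * Real.log t) L 1 := by
    simpa using ((Real.hasDerivAt_log one_ne_zero).const_mul L).const_add (f z)
  refine hray.unique (hmodel.congr_of_eventuallyEq ?_)
  filter_upwards [eventually_gt_nhds one_pos] with t ht using hhom t ht

theorem abs_mul_inv_norm_le_norm_gradient_of_log_homogeneous {f : F → ℝ} {z : F} {L : ℝ}
    (hf : DifferentiableAt ℝ f z) (hhom : ∀ t : ℝ, 0 < t → f (t • z) = f z + L * Real.log t) :
    |L| * ‖z‖⁻¹ ≤ ‖gradient f z‖ := by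
  rcases eq_or_ne z 0 with rfl | hz
  · simp
  rw [mul_inv_le_iff₀ (norm_pos_iff.mpr hz), ← inner_gradient_self_eq_of_log_homogeneous hf hhom]
  exact abs_real_inner_le_norm _ _

end Euler

section PairLogEnergy

variable {ι : Type*} [Fintype ι] [DecidableEq ι] {E : Type*} [NormedAddCommGroup E]
  [InnerProductSpace ℝ E] {p : ENNReal} [Fact (1 ≤ p)]

noncomputable def pairLogEnergy (w : ι → ι → ℝ) (z : PiLp p fun _ : ι => E) : ℝ :=
  ∑ i, ∑ j ∈ univ.erase i, w i j * Real.log ‖z i - z j‖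

theorem differentiableAt_pairLogEnergy (w : ι → ι → ℝ) {z : PiLp p fun _ : ι => E}
    (hz : ∀ i j, i ≠ j → z i ≠ z j) : DifferentiableAt ℝ (pairLogEnergy w) z := by
  refine DifferentiableAt.fun_sum fun i _ => DifferentiableAt.fun_sum fun j hj => ?_
  have hzij : z i - z j ≠ 0 := sub_ne_zero.mpr (hz i j (ne_of_mem_erase hj).symm)
  have hsub : DifferentiableAt ℝ (fun w : PiLp p (fun _ : ι => E) => w i - w j) z :=
    (PiLp.proj p (fun _ : ι => E) i).differentiableAt.sub
      (PiLp.proj p (fun _ : ι => E) j).differentiableAt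
  exact ((hsub.norm ℝ hzij).log (norm_ne_zero_iff.mpr hzij)).const_mul _

omit [Fact (1 ≤ p)] in
theorem pairLogEnergy_smul (w : ι → ι → ℝ) {z : PiLp p fun _ : ι => E}
    (hz : ∀ i j, i ≠ j → z i ≠ z j) {t : ℝ} (ht : 0 < t) :
    pairLogEnergy w (t • z) = pairLogEnergy w z + (∑ i, ∑ j ∈ univ.erase i, w i j) * Real.log t := by
  have hterm : ∀ i, ∀ j ∈ univ.erase i, w i j * Real.log ‖(t • z) i - (t • z) j‖
      = w i j * Real.log ‖z i - z j‖ + w i j * Real.log t := by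
    intro i j hj
    have hzij : z i - z j ≠ 0 := sub_ne_zero.mpr (hz i j (ne_of_mem_erase hj).symm)
    rw [PiLp.smul_apply, PiLp.smul_apply, ← smul_sub, norm_smul, Real.norm_of_nonneg ht.le,
      Real.log_mul ht.ne' (norm_ne_zero_iff.mpr hzij)]
    ring
  simp only [pairLogEnergy, sum_congr rfl fun i _ => sum_congr rfl (hterm i),
    sum_add_distrib, sum_mul]

end PairLogEnergy

theorem vortex_hamiltonian_gradient_lower_bound_general (N : ℕ) (hN : 2 ≤ N)
    (Γ : Fin N → ℝ)
    (hsum : ∀ I : Finset (Fin N), 2 ≤ I.card →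
      ∑ i ∈ I, ∑ j ∈ I.erase i, Γ i * Γ j ≠ 0)
    (H : (PiLp 2 fun _ : Fin N => EuclideanSpace ℝ (Fin 2)) → ℝ)
    (hH : H = fun z => -(1 / (2 * Real.pi)) *
      ∑ i : Fin N, ∑ j ∈ Finset.univ.erase i, Γ i * Γ j * Real.log ‖z i - z j‖) :
    ∃ c > (0 : ℝ), ∃ δ > (0 : ℝ),
      ∀ z : PiLp 2 fun _ : Fin N => EuclideanSpace ℝ (Fin 2),
        (∀ i j : Fin N, i ≠ j → z i ≠ z j) → ‖z‖ < δ →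
          c * ‖z‖⁻¹ ≤ ‖gradient H z‖ := by
  set S := ∑ i : Fin N, ∑ j ∈ univ.erase i, Γ i * Γ j
  have hS : S ≠ 0 := hsum univ (by simpa using hN)
  have hH' : H = fun z => -(1 / (2 * π)) * pairLogEnergy (fun i j => Γ i * Γ j) z := hH
  refine ⟨|-(1 / (2 * π)) * S|, abs_pos.mpr (mul_ne_zero (by simp [pi_ne_zero]) hS), 1, one_pos,
    fun z hz _ => abs_mul_inv_norm_le_norm_gradient_of_log_homogeneous ?_ fun t ht => ?_⟩
  · rw [hH']
    exact (differentiableAt_pairLogEnergy _ hz).const_mul _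
  · simp only [hH', pairLogEnergy_smul _ hz ht]
    ring

/-- Gradient lower bound near a total collision for the planar vortex
Hamiltonian `H(z) = -(1/2π) ∑_{i≠j} Γ_i Γ_j ln‖z_i - z_j‖` on the configuration space
`F_N(ℝ²)`, under the nondegeneracy condition `∑_{i,j ∈ I, i≠j} Γ_i Γ_j ≠ 0` for all `|I| ≥ 2`:
there are `c, δ > 0` with `‖∇H(z)‖ ≥ c (∑ ‖z_i‖²)^{-1/2}` whenever `(∑ ‖z_i‖²)^{1/2} < δ`.
Here `(∑_{i} ‖z_i‖²)^{1/2} = ‖z‖` in the `L²`-product space. -/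
theorem vortex_hamiltonian_gradient_lower_bound (N : ℕ) (hN : 2 ≤ N)
    (Γ : Fin N → ℝ) (hΓ : ∀ i, Γ i ≠ 0)
    (hsum : ∀ I : Finset (Fin N), 2 ≤ I.card →
      ∑ i ∈ I, ∑ j ∈ I.erase i, Γ i * Γ j ≠ 0)
    (H : (PiLp 2 fun _ : Fin N => EuclideanSpace ℝ (Fin 2)) → ℝ)
    (hH : H = fun z => -(1 / (2 * Real.pi)) *
      ∑ i : Fin N, ∑ j ∈ Finset.univ.erase i, Γ i * Γ j * Real.log ‖z i - z j‖) :
    ∃ c > (0 : ℝ), ∃ δ > (0 : ℝ),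
      ∀ z : PiLp 2 fun _ : Fin N => EuclideanSpace ℝ (Fin 2),
        (∀ i j : Fin N, i ≠ j → z i ≠ z j) → ‖z‖ < δ →
          c * ‖z‖⁻¹ ≤ ‖gradient H z‖ :=
  vortex_hamiltonian_gradient_lower_bound_general N hN Γ hsum H hH
end

section
/- Let X be a topological space, c ∈ ℝ, and f : X × [0,∞) → ℝ a continuous function such that for every x ∈ X the function t ↦ f(x,t) is strictly increasing, and for every x ∈ X there exists t ≥ 0 with f(x,t) ≥ c. Then τ(x) := min{ t ≥ 0 : f(x,t) ≥ c } is well-defined for every x ∈ X, and the function τ : X → [0,∞) is continuous. -/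
/-- If `f : X × [0,∞) → ℝ` is continuous, `t ↦ f(x,t)` is strictly
increasing for each `x`, and for each `x` some `t ≥ 0` satisfies `f(x,t) ≥ c`, then
`τ(x) = min {t ≥ 0 : f(x,t) ≥ c}` is well defined (the set has a least element, namely the
infimum `τ(x)`), and `τ : X → [0,∞)` is continuous. -/
theorem first_hitting_time_continuous {X : Type*} [TopologicalSpace X] (c : ℝ)
    (f : X → ℝ → ℝ)
    (hcont : ContinuousOn (fun p : X × ℝ => f p.1 p.2) (Set.univ ×ˢ Set.Ici (0 : ℝ)))
    (hmono : ∀ x, StrictMonoOn (f x) (Set.Ici (0 : ℝ)))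
    (hex : ∀ x, ∃ t, 0 ≤ t ∧ c ≤ f x t)
    (τ : X → ℝ) (hτ : τ = fun x => sInf {t : ℝ | 0 ≤ t ∧ c ≤ f x t}) :
    (∀ x, IsLeast {t : ℝ | 0 ≤ t ∧ c ≤ f x t} (τ x)) ∧ Continuous τ := by
  -- continuity in x for fixed t ≥ 0
  have gcont : ∀ t : ℝ, 0 ≤ t → Continuous fun x => f x t := by
    intro t ht
    exact hcont.comp_continuous (continuous_id.prodMk continuous_const)
      (fun x => ⟨Set.mem_univ x, ht⟩)
  -- continuity in t for fixed x
  have tcont : ∀ x : X, ContinuousOn (f x) (Set.Ici (0 : ℝ)) := by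
    intro x
    have : Continuous fun t : ℝ => ((x, t) : X × ℝ) :=
      continuous_const.prodMk continuous_id
    exact (hcont.comp this.continuousOn (fun t ht => ⟨Set.mem_univ x, ht⟩) :)
  have hne : ∀ x, ({t : ℝ | 0 ≤ t ∧ c ≤ f x t}).Nonempty := by
    intro x; obtain ⟨t, ht⟩ := hex x; exact ⟨t, ht⟩
  have hbdd : ∀ x, BddBelow {t : ℝ | 0 ≤ t ∧ c ≤ f x t} :=
    fun x => ⟨0, fun t ht => ht.1⟩
  have hcl : ∀ x, IsClosed {t : ℝ | 0 ≤ t ∧ c ≤ f x t} := by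
    intro x
    have : {t : ℝ | 0 ≤ t ∧ c ≤ f x t} = Set.Ici (0:ℝ) ∩ (f x) ⁻¹' Set.Ici c := by
      ext t; simp [Set.mem_setOf_eq, and_comm]
    rw [this]
    exact (tcont x).preimage_isClosed_of_isClosed isClosed_Ici isClosed_Ici
  have hleast : ∀ x, IsLeast {t : ℝ | 0 ≤ t ∧ c ≤ f x t} (τ x) := by
    intro x
    rw [hτ]
    exact ⟨(hcl x).csInf_mem (hne x) (hbdd x), fun t ht => csInf_le (hbdd x) ht⟩
  refine ⟨hleast, ?_⟩
  rw [continuous_iff_continuousAt]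
  intro x₀
  have ht₀ := hleast x₀
  set t₀ := τ x₀ with ht₀def
  have ht₀0 : 0 ≤ t₀ := ht₀.1.1
  rw [ContinuousAt, tendsto_order]
  constructor
  · -- ∀ a < t₀, eventually a < τ x
    intro a ha
    rcases lt_or_ge a 0 with ha0 | ha0
    · filter_upwards with x
      exact lt_of_lt_of_le ha0 (hleast x).1.1
    · -- 0 ≤ a < t₀, so f x₀ a < c
      have hfa : f x₀ a < c := by
        by_contra h
        exact absurd (ht₀.2 ⟨ha0, le_of_not_gt h⟩) (not_le_of_gt ha)
      have : ∀ᶠ x in nhds x₀, f x a < c :=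
        (gcont a ha0).continuousAt.eventually_lt continuousAt_const hfa
      filter_upwards [this] with x hx
      by_contra h
      push_neg at h
      have hmem := (hleast x).1
      have : f x (τ x) ≤ f x a :=
        (hmono x).monotoneOn hmem.1 ha0 h
      exact absurd (le_trans hmem.2 this) (not_le_of_gt hx)
  · -- ∀ b > t₀, eventually τ x < b
    intro b hb
    set t₁ := (t₀ + b) / 2 with ht₁def
    have ht₀t₁ : t₀ < t₁ := by simp [ht₁def]; linarith
    have ht₁b : t₁ < b := by simp [ht₁def]; linarith
    have ht₁0 : 0 ≤ t₁ := le_of_lt (lt_of_le_of_lt ht₀0 ht₀t₁)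
    have hft₁ : c < f x₀ t₁ :=
      lt_of_le_of_lt ht₀.1.2 ((hmono x₀) ht₀0 ht₁0 ht₀t₁)
    have : ∀ᶠ x in nhds x₀, c < f x t₁ :=
      continuousAt_const.eventually_lt (gcont t₁ ht₁0).continuousAt hft₁
    filter_upwards [this] with x hx
    exact lt_of_le_of_lt ((hleast x).2 ⟨ht₁0, le_of_lt hx⟩) ht₁b
end
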